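/- Consider a StackMST(γ,Δ) game whose red tree T, rooted at some vertex v0, has height h ≥ 1 (every vertex is at depth at most h from v0). Then there exists a feasible set F of blue edges (i.e., Σ_{e∈F} γ(e) ≤ Δ) such that (V, F) is a forest of stars and 2h·r(F) ≥ r*. -/

import Mathlib

namespace StackMST

variable {V : Type*}

/-- Sum of an edge-weight function over a set of edges. -/
noncomputable def esum (w : Sym2 V → ℝ) (s : Set (Sym2 V)) : ℝ := ∑ᶠ e ∈ s, w e

/-- `M` is a spanning tree of `G`. -/
def IsSpanningTreeOf (G M : SimpleGraph V) : Prop := M ≤ G ∧ M.IsTree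

/-- Total weight of `M`, where red edges (the edges of `T`) are weighted by `c`
and all other (blue) edges are weighted by `p`. -/
noncomputable def weight (T : SimpleGraph V) (c p : Sym2 V → ℝ) (M : SimpleGraph V) : ℝ :=
  esum c (M.edgeSet ∩ T.edgeSet) + esum p (M.edgeSet \ T.edgeSet)

/-- Total price of the blue edges of `M`. -/
noncomputable def blueRevenue (T : SimpleGraph V) (p : Sym2 V → ℝ) (M : SimpleGraph V) : ℝ :=
  esum p (M.edgeSet \ T.edgeSet)

/-- The leader's revenue once `F` and `p` are fixed: the follower selects a
minimum-weight spanning tree of `T ⊔ F` and, among those, one maximizing the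
total price of the blue edges it contains. -/
noncomputable def followerRevenue (T : SimpleGraph V) (c : Sym2 V → ℝ)
    (F : SimpleGraph V) (p : Sym2 V → ℝ) : ℝ :=
  sSup {r | ∃ M : SimpleGraph V, IsSpanningTreeOf (T ⊔ F) M ∧
    (∀ M' : SimpleGraph V, IsSpanningTreeOf (T ⊔ F) M' →
        weight T c p M ≤ weight T c p M') ∧
    r = blueRevenue T p M}

/-- `F` is a set of blue edges: none of its edges is a red edge. -/
def IsBlueSet (T F : SimpleGraph V) : Prop := F ≤ Tᶜ

/-- `r(F)`: the best revenue the leader can obtain from the activated set `F`. -/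
noncomputable def revenueOf (T : SimpleGraph V) (c : Sym2 V → ℝ) (F : SimpleGraph V) : ℝ :=
  sSup {r | ∃ p : Sym2 V → ℝ, (∀ e ∈ F.edgeSet, 0 ≤ p e) ∧ r = followerRevenue T c F p}

/-- Optimal revenue `r*(T, c)` of the StackMST(0,0) game on the red tree `T`. -/
noncomputable def optRevenue (T : SimpleGraph V) (c : Sym2 V → ℝ) : ℝ :=
  sSup {r | ∃ (F : SimpleGraph V) (p : Sym2 V → ℝ), IsBlueSet T F ∧
    (∀ e ∈ F.edgeSet, 0 ≤ p e) ∧ r = followerRevenue T c F p}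

/-- Total cost `c(T)` of the red edges. -/
noncomputable def redCost (T : SimpleGraph V) (c : Sym2 V → ℝ) : ℝ := esum c T.edgeSet

/-- Optimal revenue of the budgeted game StackMST(γ, Δ). -/
noncomputable def gammaOptRevenue (T : SimpleGraph V) (c γ : Sym2 V → ℝ) (Δ : ℝ) : ℝ :=
  sSup {r | ∃ F : SimpleGraph V, IsBlueSet T F ∧ esum γ F.edgeSet ≤ Δ ∧
    r = revenueOf T c F}

end StackMST

namespace StackMST

/-- A simple graph is a forest of stars if there is a set `C` of centers such that
every edge joins a center to a non-center and every non-center vertex has at most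
one neighbour. -/
def IsForestOfStars {V : Type*} (F : SimpleGraph V) : Prop :=
  ∃ C : Set V, (∀ u v : V, F.Adj u v → (u ∈ C ↔ v ∉ C)) ∧
    (∀ v : V, v ∉ C → (F.neighborSet v).Subsingleton)

end StackMST

/-!
Fix a feasible `F`, prices `p` and a tree `M` the follower may pick, rooted anywhere.
Classifying the blue edges of `M` by the parity of the depth of their upper endpoint splits them
into two forests of stars (in a tree every vertex has a unique parent), each within budget.
Offered one part `E` alone at the same prices, the follower still buys all of `E`, because a
minimum spanning tree of `T ⊔ E` can be chosen to contain every edge of `M` it may use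
(exchange argument). So each part earns at most the best forest-of-stars revenue `R`, and every
revenue is at most `2R ≤ 2hR`.
-/

namespace SimpleGraph

variable {V : Type*} {G : SimpleGraph V}

lemma edgeSet_deleteEdges_sup_edge (G : SimpleGraph V) (f : Sym2 V) {x y : V} (hxy : x ≠ y) :
    (G.deleteEdges {f} ⊔ edge x y).edgeSet = insert s(x, y) (G.edgeSet \ {f}) := by
  rw [edgeSet_sup, edgeSet_deleteEdges, edgeSet_edge_of_ne hxy, Set.union_comm,
    Set.singleton_union]

lemma Reachable.deleteEdges_reachable_or {z a : V} (b : V) (h : G.Reachable z a) :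
    (G.deleteEdges {s(a, b)}).Reachable z a ∨ (G.deleteEdges {s(a, b)}).Reachable z b := by
  classical
  obtain ⟨P, hP⟩ := h.exists_isPath
  by_cases hab : s(a, b) ∈ P.edges
  · have hb : b ∈ P.support := P.snd_mem_support_of_mem_edges hab
    have haP : a ∉ (P.takeUntil b hb).support :=
      Walk.endpoint_notMem_support_takeUntil hP hb (P.adj_of_mem_edges hab).ne
    refine Or.inr (reachable_deleteEdges_iff_exists_walk.mpr ⟨P.takeUntil b hb, fun h => ?_⟩)
    exact haP ((P.takeUntil b hb).fst_mem_support_of_mem_edges h)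
  · exact Or.inl (reachable_deleteEdges_iff_exists_walk.mpr ⟨P, hab⟩)

lemma IsTree.deleteEdges_sup_edge {a b c d : V} (hG : G.IsTree)
    (hsep : ¬(G.deleteEdges {s(a, b)}).Reachable c d) :
    (G.deleteEdges {s(a, b)} ⊔ edge c d).IsTree := by
  set G₀ := G.deleteEdges {s(a, b)}
  refine ⟨?_, (hG.isAcyclic.anti (deleteEdges_le _)).sup_edge_of_not_reachable hsep⟩
  have hcd : (G₀ ⊔ edge c d).Reachable c d := by
    refine Adj.reachable (Or.inr ((edge_adj ..).mpr ⟨Or.inl ⟨rfl, rfl⟩, ?_⟩))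
    rintro rfl
    exact hsep .rfl
  have hside (z : V) : G₀.Reachable z a ∨ G₀.Reachable z b :=
    Reachable.deleteEdges_reachable_or b (hG.connected z a)
  have hab : (G₀ ⊔ edge c d).Reachable a b := by
    have hmono {x y : V} (h : G₀.Reachable x y) : (G₀ ⊔ edge c d).Reachable x y :=
      h.mono le_sup_left
    rcases hside c with hc | hc <;> rcases hside d with hd | hd
    · exact absurd (hc.trans hd.symm) hsep
    · exact ((hmono hc).symm.trans hcd).trans (hmono hd)
    · exact ((hmono hd).symm.trans hcd.symm).trans (hmono hc)
    · exact absurd (hc.trans hd.symm) hsep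
  refine (connected_iff_exists_forall_reachable _).mpr ⟨a, fun z => ?_⟩
  rcases hside z with hz | hz
  · exact (hz.mono le_sup_left).symm
  · exact hab.trans (hz.mono le_sup_left).symm

lemma IsAcyclic.not_reachable_deleteEdges_of_mem_edges (hG : G.IsAcyclic) {u v : V}
    {p : G.Walk u v} (hp : p.IsPath) {f : Sym2 V} (hf : f ∈ p.edges) :
    ¬(G.deleteEdges {f}).Reachable u v := by
  intro hreach
  obtain ⟨q, hq⟩ := hreach.exists_isPath
  have hpq : p = q.mapLe (deleteEdges_le _) :=
    congrArg Subtype.val (hG.subsingleton_path u v |>.elim ⟨p, hp⟩ ⟨_, hq.mapLe _⟩)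
  rw [hpq, Walk.edges_mapLe_eq_edges] at hf
  simpa using q.edges_subset_edgeSet hf

lemma IsTree.eq_of_adj_of_dist_eq_add_one (hG : G.IsTree) (r : V) {v w w' : V}
    (hw : G.Adj v w) (hw' : G.Adj v w')
    (h : G.dist r v = G.dist r w + 1) (h' : G.dist r v = G.dist r w' + 1) : w = w' := by
  classical
  obtain ⟨p, hp⟩ := (hG.connected r v).exists_isPath
  have hmem {x : V} (hx : G.Adj v x) (hd : G.dist r v = G.dist r x + 1) : x ∈ p.support := by
    obtain ⟨q, hq, hql⟩ := (hG.connected r x).exists_path_of_dist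
    refine hG.isAcyclic.mem_support_of_ne_mem_support_of_adj_of_isPath hp hq hx fun hv => ?_
    have := (dist_le (q.takeUntil v hv)).trans (q.length_takeUntil_le_length hv)
    omega
  rw [hG.isAcyclic.eq_penultimate_of_adj_end hp hw (hmem hw h),
    hG.isAcyclic.eq_penultimate_of_adj_end hp hw' (hmem hw' h')]

end SimpleGraph

namespace StackMST

open SimpleGraph

variable {V : Type*}

lemma esum_nonneg {w : Sym2 V → ℝ} {s : Set (Sym2 V)} (h : ∀ e ∈ s, 0 ≤ w e) :
    0 ≤ esum w s :=
  finsum_nonneg fun e => finsum_nonneg fun he => h e he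

section MinSpanningTree

variable [Finite V]

lemma esum_mono {w : Sym2 V → ℝ} {s t : Set (Sym2 V)} (hst : s ⊆ t)
    (h : ∀ e ∈ t \ s, 0 ≤ w e) : esum w s ≤ esum w t := by
  rw [esum, esum, ← finsum_mem_add_sdiff hst t.toFinite]
  exact le_add_of_nonneg_right (esum_nonneg h)

lemma esum_union_le {w : Sym2 V → ℝ} {s t : Set (Sym2 V)} (h : ∀ e ∈ s ∩ t, 0 ≤ w e) :
    esum w (s ∪ t) ≤ esum w s + esum w t := by
  rw [esum, esum, esum, ← finsum_mem_union_inter s.toFinite t.toFinite]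
  exact le_add_of_nonneg_right (esum_nonneg h)

lemma esum_insert_sdiff_singleton {w : Sym2 V → ℝ} {s : Set (Sym2 V)} {e f : Sym2 V}
    (hf : f ∈ s) (he : e ∉ s) : esum w (insert e (s \ {f})) = esum w s - w f + w e := by
  have he' : e ∉ s \ {f} := fun h => he h.1
  rw [esum, finsum_mem_insert _ he' s.toFinite.sdiff, esum,
    ← finsum_mem_add_sdiff (Set.singleton_subset_iff.mpr hf) s.toFinite, finsum_mem_singleton]
  ring

variable {G G' M N : SimpleGraph V} {w : Sym2 V → ℝ}

def IsMinSpanningTree (G : SimpleGraph V) (w : Sym2 V → ℝ) (M : SimpleGraph V) : Prop :=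
  IsSpanningTreeOf G M ∧ ∀ M', IsSpanningTreeOf G M' → esum w M.edgeSet ≤ esum w M'.edgeSet

lemma _root_.SimpleGraph.Connected.exists_isMinSpanningTree (hG : G.Connected)
    (w : Sym2 V → ℝ) : ∃ M, IsMinSpanningTree G w M := by
  obtain ⟨T, hTG, hT⟩ := hG.exists_isTree_le
  obtain ⟨M, hM, hmin⟩ := Set.exists_min_image {M | IsSpanningTreeOf G M}
    (fun M => esum w M.edgeSet) (Set.toFinite _) ⟨T, hTG, hT⟩
  exact ⟨M, hM, hmin⟩

lemma IsMinSpanningTree.le_of_not_reachable_deleteEdges (hM : IsMinSpanningTree G w M)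
    {a b x y : V} (hab : s(a, b) ∈ M.edgeSet) (hxy : G.Adj x y)
    (hsep : ¬(M.deleteEdges {s(a, b)}).Reachable x y) : w s(a, b) ≤ w s(x, y) := by
  by_cases hfe : s(x, y) = s(a, b)
  · rw [hfe]
  have hfM : s(x, y) ∉ M.edgeSet := fun h =>
    hsep (Adj.reachable ((deleteEdges_adj ..).mpr ⟨h, by simpa using hfe⟩))
  have hle : M.deleteEdges {s(a, b)} ⊔ edge x y ≤ G :=
    sup_le ((deleteEdges_le _).trans hM.1.1) ((edge_le_iff _).mpr (Or.inr hxy))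
  have := hM.2 _ ⟨hle, hM.1.2.deleteEdges_sup_edge hsep⟩
  rw [edgeSet_deleteEdges_sup_edge _ _ hxy.ne, esum_insert_sdiff_singleton hab hfM] at this
  linarith

/-- The edge `f` is where an `N`-path between the ends of `e` crosses the cut of `M` minus `e`;
the cut property of `M` gives `w e ≤ w f`. -/
lemma IsMinSpanningTree.exists_exchange (hG' : G' ≤ G) (hM : IsMinSpanningTree G w M)
    (hN : IsMinSpanningTree G' w N) {e : Sym2 V} (heM : e ∈ M.edgeSet)
    (heG' : e ∈ G'.edgeSet) (heN : e ∉ N.edgeSet) :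
    ∃ N', IsMinSpanningTree G' w N' ∧
      ∃ f ∉ M.edgeSet, N'.edgeSet = insert e (N.edgeSet \ {f}) := by
  induction e with | h u v => ?_
  have huv : ¬(M.deleteEdges {s(u, v)}).Reachable u v :=
    isBridge_iff.mp (isAcyclic_iff_forall_isBridge.mp hM.1.2.isAcyclic heM)
  obtain ⟨W, hW⟩ := (hN.1.2.connected u v).exists_isPath
  obtain ⟨⟨⟨x, y⟩, hxy⟩, hdW, hx, hy⟩ :=
    W.exists_boundary_dart {z | (M.deleteEdges {s(u, v)}).Reachable u z} .rfl huv
  have hxy_sep : ¬(M.deleteEdges {s(u, v)}).Reachable x y := fun h => hy (hx.trans h)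
  have hfW : s(x, y) ∈ W.edges := List.mem_map_of_mem (f := Dart.edge) hdW
  have hfN : s(x, y) ∈ N.edgeSet := W.edges_subset_edgeSet hfW
  have hfM : s(x, y) ∉ M.edgeSet := fun h => hxy_sep (Adj.reachable
    ((deleteEdges_adj ..).mpr ⟨h, fun h' => heN (Set.mem_singleton_iff.mp h' ▸ hfN)⟩))
  have hwe : w s(u, v) ≤ w s(x, y) :=
    hM.le_of_not_reachable_deleteEdges heM (hG' (hN.1.1 hxy)) hxy_sep
  have hsep : ¬(N.deleteEdges {s(x, y)}).Reachable u v :=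
    hN.1.2.isAcyclic.not_reachable_deleteEdges_of_mem_edges hW hfW
  have hedges := edgeSet_deleteEdges_sup_edge N s(x, y) (G'.ne_of_adj heG')
  refine ⟨N.deleteEdges {s(x, y)} ⊔ edge u v,
    ⟨⟨?_, hN.1.2.deleteEdges_sup_edge hsep⟩, ?_⟩, s(x, y), hfM, hedges⟩
  · exact sup_le ((deleteEdges_le _).trans hN.1.1) ((edge_le_iff _).mpr (Or.inr heG'))
  · intro M' hM'
    rw [hedges, esum_insert_sdiff_singleton hfN heN]
    linarith [hN.2 M' hM']

lemma IsMinSpanningTree.exists_inter_subset (hG' : G' ≤ G) (hG'c : G'.Connected)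
    (hM : IsMinSpanningTree G w M) :
    ∃ N, IsMinSpanningTree G' w N ∧ M.edgeSet ∩ G'.edgeSet ⊆ N.edgeSet := by
  obtain ⟨N₀, hN₀⟩ := hG'c.exists_isMinSpanningTree w
  obtain ⟨N, hN, hmax⟩ := Set.exists_max_image {N | IsMinSpanningTree G' w N}
    (fun N => (N.edgeSet ∩ M.edgeSet).ncard) (Set.toFinite _) ⟨N₀, hN₀⟩
  refine ⟨N, hN, fun e ⟨heM, heG'⟩ => by_contra fun heN => ?_⟩
  obtain ⟨N', hN', f, hfM, hN'e⟩ := hM.exists_exchange hG' hN heM heG' heN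
  have hinter : N'.edgeSet ∩ M.edgeSet = insert e (N.edgeSet ∩ M.edgeSet) := by
    rw [hN'e]
    ext x
    simp only [Set.mem_inter_iff, Set.mem_insert_iff, Set.mem_sdiff, Set.mem_singleton_iff]
    grind
  have hcard := hmax N' hN'
  rw [hinter, Set.ncard_insert_of_notMem (fun h => heN h.1) (Set.toFinite _)] at hcard
  omega

end MinSpanningTree

def parityEdges (M : SimpleGraph V) (r : V) (i : ℕ) : Set (Sym2 V) :=
  {e | ∃ x y, e = s(x, y) ∧ M.Adj x y ∧ M.dist r y = M.dist r x + 1 ∧ M.dist r x % 2 = i}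

lemma IsForestOfStars.anti {F F' : SimpleGraph V} (h : F ≤ F') (hF' : IsForestOfStars F') :
    IsForestOfStars F := by
  obtain ⟨C, hC, hleaf⟩ := hF'
  exact ⟨C, fun u v huv => hC u v (h huv), fun v hv => (hleaf v hv).anti fun _ hw => h hw⟩

lemma isForestOfStars_bot : IsForestOfStars (⊥ : SimpleGraph V) :=
  ⟨∅, fun _ _ h => h.elim, fun _ _ _ h => h.elim⟩

lemma _root_.SimpleGraph.IsTree.isForestOfStars_parityEdges {M : SimpleGraph V} (hM : M.IsTree)
    (r : V) (i : ℕ) : IsForestOfStars (fromEdgeSet (parityEdges M r i)) := by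
  refine ⟨{z | M.dist r z % 2 = i}, fun u v huv => ?_, fun v hv w hw w' hw' => ?_⟩
  · obtain ⟨⟨x, y, hxy, -, hd, hi⟩, -⟩ := (fromEdgeSet_adj _).mp huv
    rcases Sym2.eq_iff.mp hxy with ⟨rfl, rfl⟩ | ⟨rfl, rfl⟩
    all_goals simp only [Set.mem_ofPred_eq]; omega
  · have hparent {w : V} (hw : (fromEdgeSet (parityEdges M r i)).Adj v w) :
        M.Adj v w ∧ M.dist r v = M.dist r w + 1 := by
      obtain ⟨⟨x, y, hxy, hadj, hd, hi⟩, -⟩ := (fromEdgeSet_adj _).mp hw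
      rcases Sym2.eq_iff.mp hxy with ⟨rfl, rfl⟩ | ⟨rfl, rfl⟩
      · exact absurd hi hv
      · exact ⟨hadj.symm, hd⟩
    exact hM.eq_of_adj_of_dist_eq_add_one r (hparent hw).1 (hparent hw').1 (hparent hw).2
      (hparent hw').2

lemma _root_.SimpleGraph.IsTree.edgeSet_subset_parityEdges {M : SimpleGraph V} (hM : M.IsTree)
    (r : V) : M.edgeSet ⊆ parityEdges M r 0 ∪ parityEdges M r 1 := by
  intro e he
  induction e with | h x y => ?_
  have hxy : M.Adj x y := he
  rcases hM.dist_eq_dist_add_one_of_adj r hxy with hd | hd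
  · have hmem (i : ℕ) (hi : M.dist r y % 2 = i) : s(x, y) ∈ parityEdges M r i :=
      ⟨y, x, Sym2.eq_swap, hxy.symm, hd, hi⟩
    exact (Nat.mod_two_eq_zero_or_one _).imp (hmem 0) (hmem 1)
  · have hmem (i : ℕ) (hi : M.dist r x % 2 = i) : s(x, y) ∈ parityEdges M r i :=
      ⟨x, y, rfl, hxy, hd, hi⟩
    exact (Nat.mod_two_eq_zero_or_one _).imp (hmem 0) (hmem 1)

open Classical in
noncomputable def edgeWeight (T : SimpleGraph V) (c p : Sym2 V → ℝ) : Sym2 V → ℝ :=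
  T.edgeSet.piecewise c p

lemma edgeSet_sdiff_subset_of_le_sup {T F M : SimpleGraph V} (h : M ≤ T ⊔ F) :
    M.edgeSet \ T.edgeSet ⊆ F.edgeSet := fun _ he => by
  have := edgeSet_mono h he.1
  rw [edgeSet_sup] at this
  exact this.resolve_left he.2

lemma isBlueSet_fromEdgeSet {T : SimpleGraph V} {E : Set (Sym2 V)}
    (hE : ∀ e ∈ E, e ∉ T.edgeSet) : IsBlueSet T (fromEdgeSet E) :=
  fun _ _ hab => (compl_adj ..).mpr ⟨hab.2, fun hT => hE _ hab.1 hT⟩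

section Game

variable [Finite V] {T F M : SimpleGraph V} {c p : Sym2 V → ℝ}

lemma weight_eq_esum_edgeWeight (T : SimpleGraph V) (c p : Sym2 V → ℝ) (M : SimpleGraph V) :
    weight T c p M = esum (edgeWeight T c p) M.edgeSet := by
  classical
  rw [weight, esum, esum, esum, ← finsum_mem_inter_add_sdiff T.edgeSet M.edgeSet.toFinite]
  congr 1 <;> refine finsum_mem_congr rfl fun e he => ?_
  · exact (Set.piecewise_eq_of_mem _ _ _ he.2).symm
  · exact (Set.piecewise_eq_of_notMem _ _ _ he.2).symm

lemma followerRevenue_eq_sSup (T : SimpleGraph V) (c : Sym2 V → ℝ) (F : SimpleGraph V)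
    (p : Sym2 V → ℝ) : followerRevenue T c F p =
      sSup (blueRevenue T p '' {M | IsMinSpanningTree (T ⊔ F) (edgeWeight T c p) M}) := by
  simp only [followerRevenue, IsMinSpanningTree, ← weight_eq_esum_edgeWeight]
  congr 1
  ext r
  simp only [Set.mem_image, Set.mem_ofPred_eq]
  grind

lemma blueRevenue_le_redCost (hT : T.IsTree) (hc : ∀ e ∈ T.edgeSet, 0 ≤ c e)
    (hM : IsMinSpanningTree (T ⊔ F) (edgeWeight T c p) M) :
    blueRevenue T p M ≤ redCost T c := by
  have hle := hM.2 T ⟨le_sup_left, hT⟩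
  rw [← weight_eq_esum_edgeWeight, ← weight_eq_esum_edgeWeight, weight, weight,
    Set.inter_self, Set.sdiff_self, show esum p ∅ = 0 from finsum_mem_empty] at hle
  have hred : 0 ≤ esum c (M.edgeSet ∩ T.edgeSet) := esum_nonneg fun e he => hc e he.2
  rw [blueRevenue, redCost]
  linarith

lemma bddAbove_blueRevenue_image (hT : T.IsTree) (hc : ∀ e ∈ T.edgeSet, 0 ≤ c e) :
    BddAbove (blueRevenue T p '' {M | IsMinSpanningTree (T ⊔ F) (edgeWeight T c p) M}) :=
  ⟨redCost T c, Set.forall_mem_image.mpr fun _ hM => blueRevenue_le_redCost hT hc hM⟩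

lemma blueRevenue_le_followerRevenue (hT : T.IsTree) (hc : ∀ e ∈ T.edgeSet, 0 ≤ c e)
    (hM : IsMinSpanningTree (T ⊔ F) (edgeWeight T c p) M) :
    blueRevenue T p M ≤ followerRevenue T c F p := by
  rw [followerRevenue_eq_sSup]
  exact le_csSup (bddAbove_blueRevenue_image hT hc) ⟨M, hM, rfl⟩

lemma followerRevenue_le_redCost (hT : T.IsTree) (hc : ∀ e ∈ T.edgeSet, 0 ≤ c e) :
    followerRevenue T c F p ≤ redCost T c := by
  rw [followerRevenue_eq_sSup]
  exact Real.sSup_le (Set.forall_mem_image.mpr fun _ hM => blueRevenue_le_redCost hT hc hM)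
    (esum_nonneg hc)

lemma followerRevenue_le_revenueOf (hT : T.IsTree) (hc : ∀ e ∈ T.edgeSet, 0 ≤ c e)
    (hp : ∀ e ∈ F.edgeSet, 0 ≤ p e) : followerRevenue T c F p ≤ revenueOf T c F :=
  le_csSup ⟨redCost T c, by rintro _ ⟨q, -, rfl⟩; exact followerRevenue_le_redCost hT hc⟩
    ⟨p, hp, rfl⟩

lemma revenueOf_nonneg (hT : T.IsTree) (hc : ∀ e ∈ T.edgeSet, 0 ≤ c e) :
    0 ≤ revenueOf T c F := by
  obtain ⟨M, hM⟩ :=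
    (hT.connected.mono (le_sup_left : T ≤ T ⊔ F)).exists_isMinSpanningTree (edgeWeight T c 0)
  calc 0 = blueRevenue T 0 M := (finsum_mem_zero _).symm
    _ ≤ followerRevenue T c F 0 := blueRevenue_le_followerRevenue hT hc hM
    _ ≤ revenueOf T c F := followerRevenue_le_revenueOf hT hc fun _ _ => le_rfl

lemma esum_le_revenueOf_fromEdgeSet (hT : T.IsTree) (hc : ∀ e ∈ T.edgeSet, 0 ≤ c e)
    (hM : IsMinSpanningTree (T ⊔ F) (edgeWeight T c p) M) (hp : ∀ e ∈ F.edgeSet, 0 ≤ p e)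
    {E : Set (Sym2 V)} (hE : E ⊆ M.edgeSet \ T.edgeSet) :
    esum p E ≤ revenueOf T c (fromEdgeSet E) := by
  have hEF : E ⊆ F.edgeSet := hE.trans (edgeSet_sdiff_subset_of_le_sup hM.1.1)
  have hle : T ⊔ fromEdgeSet E ≤ T ⊔ F :=
    sup_le_sup_left ((fromEdgeSet_le _).mpr fun _ he => hEF he.1) T
  obtain ⟨N, hN, hsub⟩ := hM.exists_inter_subset hle (hT.connected.mono le_sup_left)
  have hNE : N.edgeSet \ T.edgeSet = E := by
    refine subset_antisymm (fun e he => ?_) fun e he => ⟨hsub ⟨(hE he).1, ?_⟩, (hE he).2⟩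
    · have := edgeSet_sdiff_subset_of_le_sup hN.1.1 he
      rw [edgeSet_fromEdgeSet] at this
      exact this.1
    · rw [edgeSet_sup, edgeSet_fromEdgeSet]
      exact Or.inr ⟨he, M.not_isDiag_of_mem_edgeSet (hE he).1⟩
  calc esum p E = blueRevenue T p N := by rw [blueRevenue, hNE]
    _ ≤ followerRevenue T c (fromEdgeSet E) p := blueRevenue_le_followerRevenue hT hc hN
    _ ≤ revenueOf T c (fromEdgeSet E) :=
      followerRevenue_le_revenueOf hT hc fun e he =>
        hp e (hEF (edgeSet_fromEdgeSet E ▸ he).1)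

lemma followerRevenue_le_two_mul {γ : Sym2 V → ℝ} {Δ R : ℝ} (hT : T.IsTree)
    (hc : ∀ e ∈ T.edgeSet, 0 ≤ c e) (hγ : ∀ e, 0 ≤ γ e) (hFΔ : esum γ F.edgeSet ≤ Δ)
    (hp : ∀ e ∈ F.edgeSet, 0 ≤ p e)
    (hR : ∀ F', IsBlueSet T F' → esum γ F'.edgeSet ≤ Δ → IsForestOfStars F' →
      revenueOf T c F' ≤ R) :
    followerRevenue T c F p ≤ 2 * R := by
  obtain ⟨M₀, hM₀⟩ :=
    (hT.connected.mono (le_sup_left : T ≤ T ⊔ F)).exists_isMinSpanningTree (edgeWeight T c p)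
  obtain ⟨r⟩ := hT.connected.nonempty
  rw [followerRevenue_eq_sSup]
  refine csSup_le ⟨_, M₀, hM₀, rfl⟩ ?_
  rintro _ ⟨M, hM, rfl⟩
  set B := M.edgeSet \ T.edgeSet
  have hBF : B ⊆ F.edgeSet := edgeSet_sdiff_subset_of_le_sup hM.1.1
  have hpart (i : ℕ) : esum p (B ∩ parityEdges M r i) ≤ R := by
    have hE : B ∩ parityEdges M r i ⊆ B := Set.inter_subset_left
    refine (esum_le_revenueOf_fromEdgeSet hT hc hM hp hE).trans (hR _ ?_ ?_ ?_)
    · exact isBlueSet_fromEdgeSet fun e he => (hE he).2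
    · refine le_trans (esum_mono ?_ fun e _ => hγ e) hFΔ
      rw [edgeSet_fromEdgeSet]
      exact fun e he => hBF (hE he.1)
    · exact (hM.1.2.isForestOfStars_parityEdges r i).anti
        (fromEdgeSet_mono Set.inter_subset_right)
  have hB : B = B ∩ parityEdges M r 0 ∪ B ∩ parityEdges M r 1 := by
    rw [← Set.inter_union_distrib_left, Set.inter_eq_left.mpr]
    exact Set.sdiff_subset.trans (hM.1.2.edgeSet_subset_parityEdges r)
  calc blueRevenue T p M = esum p (B ∩ parityEdges M r 0 ∪ B ∩ parityEdges M r 1) := by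
        rw [← hB]; rfl
    _ ≤ esum p (B ∩ parityEdges M r 0) + esum p (B ∩ parityEdges M r 1) :=
        esum_union_le fun e he => hp e (hBF he.1.1)
    _ ≤ 2 * R := by linarith [hpart 0, hpart 1]

lemma revenueOf_le_two_mul {γ : Sym2 V → ℝ} {Δ R : ℝ} (hT : T.IsTree)
    (hc : ∀ e ∈ T.edgeSet, 0 ≤ c e) (hγ : ∀ e, 0 ≤ γ e) (hFΔ : esum γ F.edgeSet ≤ Δ)
    (hR : ∀ F', IsBlueSet T F' → esum γ F'.edgeSet ≤ Δ → IsForestOfStars F' →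
      revenueOf T c F' ≤ R) :
    revenueOf T c F ≤ 2 * R := by
  refine csSup_le ⟨_, 0, fun _ _ => le_rfl, rfl⟩ ?_
  rintro _ ⟨p, hp, rfl⟩
  exact followerRevenue_le_two_mul hT hc hγ hFΔ hp hR

end Game
end StackMST

open StackMST

theorem stackMST_budget_forest_of_stars_general {V : Type*} [Finite V]
    (T : SimpleGraph V) (hT : T.IsTree)
    (c : Sym2 V → ℝ) (hc : ∀ e ∈ T.edgeSet, 0 ≤ c e)
    (γ : Sym2 V → ℝ) (hγ : ∀ e : Sym2 V, 0 ≤ γ e) (Δ : ℝ) (hΔ : 0 ≤ Δ)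
    (h : ℕ) (hh : 1 ≤ h) :
    ∃ F : SimpleGraph V, IsBlueSet T F ∧ esum γ F.edgeSet ≤ Δ ∧
      IsForestOfStars F ∧
      gammaOptRevenue T c γ Δ ≤ (2 * h : ℝ) * revenueOf T c F := by
  have hbot : esum γ (⊥ : SimpleGraph V).edgeSet ≤ Δ := by
    rwa [SimpleGraph.edgeSet_bot, esum, finsum_mem_empty]
  obtain ⟨F, ⟨hFblue, hFΔ, hFstars⟩, hFmax⟩ := Set.exists_max_image
    {F | IsBlueSet T F ∧ esum γ F.edgeSet ≤ Δ ∧ IsForestOfStars F} (revenueOf T c)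
    (Set.toFinite _) ⟨⊥, bot_le, hbot, isForestOfStars_bot⟩
  refine ⟨F, hFblue, hFΔ, hFstars, ?_⟩
  calc gammaOptRevenue T c γ Δ ≤ 2 * revenueOf T c F := by
        refine csSup_le ⟨_, ⊥, bot_le, hbot, rfl⟩ ?_
        rintro _ ⟨F', -, hF'Δ, rfl⟩
        exact revenueOf_le_two_mul hT hc hγ hF'Δ fun F'' h₁ h₂ h₃ => hFmax F'' ⟨h₁, h₂, h₃⟩
    _ ≤ (2 * h : ℝ) * revenueOf T c F := by
        gcongr
        · exact revenueOf_nonneg hT hc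
        · exact le_mul_of_one_le_right zero_le_two (by exact_mod_cast hh)

/-- Consider a StackMST(γ,Δ) game whose red tree `T`, rooted at
`v0`, has height `h ≥ 1` (every vertex is at depth at most `h` from `v0`). Then
there is a feasible set `F` of blue edges (total activation cost at most `Δ`) such
that `(V, F)` is a forest of stars and `2h·r(F) ≥ r*`. -/
theorem stackMST_budget_forest_of_stars {V : Type*} [Finite V]
    (T : SimpleGraph V) (hT : T.IsTree)
    (c : Sym2 V → ℝ) (hc : ∀ e ∈ T.edgeSet, 0 ≤ c e)
    (γ : Sym2 V → ℝ) (hγ : ∀ e : Sym2 V, 0 ≤ γ e) (Δ : ℝ) (hΔ : 0 ≤ Δ)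
    (v0 : V) (h : ℕ) (hh : 1 ≤ h) (hheight : ∀ v : V, T.dist v0 v ≤ h) :
    ∃ F : SimpleGraph V, IsBlueSet T F ∧ esum γ F.edgeSet ≤ Δ ∧
      IsForestOfStars F ∧
      gammaOptRevenue T c γ Δ ≤ (2 * h : ℝ) * revenueOf T c F :=
  stackMST_budget_forest_of_stars_general T hT c hc γ hγ Δ hΔ h hh
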